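/- arXiv:1910.08018 — 3 statements merged into one kernel-verified Lean document; each statement's English description precedes it below -/
import Mathlib

section
/- Let P be an n×n real symmetric positive semidefinite matrix of rank at least r, with eigenvalues listed in decreasing order. Let X₀ be the orthogonal projection onto the span of the top r eigenvectors of P, and let X̂ be any orthogonal projection matrix of rank r_t < r. Then ⟨P², X₀ − X̂⟩ ≥ λᵣ(P)², where λᵣ(P) is the r-th largest eigenvalue of P and ⟨A,B⟩ = trace(AB). -/
/-!
In the eigenbasis `Q` of `P`, `⟨P², X₀⟩` is the sum of the `r` largest values `dᵢ²`, while
`⟨P², X̂⟩ = ∑ dᵢ² Mᵢᵢ` for the projection `M = Qᵀ X̂ Q`, whose diagonal lies in `[0, 1]` and sums to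
`tr M = rank X̂ = r_t`. For antitone weights such a combination is at most the sum of the `r_t`
largest weights, so `⟨P², X₀ - X̂⟩` dominates the sum of `dᵢ²` over `r_t ≤ i < r`, which contains
`d_{r-1}²`.
-/

open Matrix

namespace Matrix

variable {m R : Type*} [Fintype m]

theorem trace_eq_rank_of_isIdempotentElem [DecidableEq m] {K : Type*} [Field K]
    {A : Matrix m m K} (hA : IsIdempotentElem A) : A.trace = A.rank := by
  rw [← trace_toLin'_eq]
  exact (LinearMap.IsIdempotentElem.isProj_range _ (hA.map (toLinAlgEquiv' (R := K)))).trace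

section Ordered

variable [CommRing R] [LinearOrder R] [IsStrictOrderedRing R]

theorem IsSymm.diag_nonneg_of_isIdempotentElem {A : Matrix m m R} (hs : A.IsSymm)
    (hA : IsIdempotentElem A) (i : m) : 0 ≤ A i i := by
  rw [← hA, mul_apply]
  exact Finset.sum_nonneg fun k _ => hs.apply k i ▸ mul_self_nonneg (A k i)

theorem IsSymm.diag_le_one_of_isIdempotentElem [DecidableEq m] {A : Matrix m m R}
    (hs : A.IsSymm) (hA : IsIdempotentElem A) (i : m) : A i i ≤ 1 := by
  have := (isSymm_one.sub hs).diag_nonneg_of_isIdempotentElem hA.one_sub i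
  simpa [sub_nonneg] using this

end Ordered

section Conjugation

variable [CommRing R] {Q : Matrix m m R}

theorem IsSymm.transpose_mul_mul (Q : Matrix m m R) {X : Matrix m m R} (hX : X.IsSymm) :
    (Qᵀ * X * Q).IsSymm := by
  simp [IsSymm, transpose_mul, hX.eq, Matrix.mul_assoc]

theorem isIdempotentElem_transpose_mul_mul [DecidableEq m] (hQ : Q * Qᵀ = 1)
    {X : Matrix m m R} (hX : IsIdempotentElem X) : IsIdempotentElem (Qᵀ * X * Q) := by
  calc Qᵀ * X * Q * (Qᵀ * X * Q) = Qᵀ * (X * (Q * Qᵀ) * X) * Q := by simp only [Matrix.mul_assoc]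
    _ = Qᵀ * X * Q := by rw [hQ, Matrix.mul_one, hX.eq]

theorem trace_transpose_mul_mul [DecidableEq m] (hQ : Q * Qᵀ = 1) (X : Matrix m m R) :
    (Qᵀ * X * Q).trace = X.trace := by
  rw [trace_mul_cycle, hQ, Matrix.one_mul]

theorem transpose_mul_conj_diagonal [DecidableEq m] (hQ : Qᵀ * Q = 1) (e : m → R) :
    Qᵀ * (Q * diagonal e * Qᵀ) * Q = diagonal e := by
  calc Qᵀ * (Q * diagonal e * Qᵀ) * Q = Qᵀ * Q * diagonal e * (Qᵀ * Q) := by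
        simp only [Matrix.mul_assoc]
    _ = diagonal e := by rw [hQ, Matrix.one_mul, Matrix.mul_one]

theorem conj_diagonal_mul_conj_diagonal [DecidableEq m] (hQ : Qᵀ * Q = 1) (a b : m → R) :
    Q * diagonal a * Qᵀ * (Q * diagonal b * Qᵀ) = Q * diagonal (a * b) * Qᵀ := by
  calc Q * diagonal a * Qᵀ * (Q * diagonal b * Qᵀ)
      = Q * (diagonal a * (Qᵀ * Q) * diagonal b) * Qᵀ := by simp only [Matrix.mul_assoc]
    _ = Q * diagonal (a * b) * Qᵀ := by rw [hQ, Matrix.mul_one, diagonal_mul_diagonal]; rfl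

theorem trace_conj_diagonal_mul [DecidableEq m] (Q : Matrix m m R) (e : m → R)
    (X : Matrix m m R) : (Q * diagonal e * Qᵀ * X).trace = ∑ i, e i * (Qᵀ * X * Q) i i := by
  rw [Matrix.mul_assoc, Matrix.mul_assoc, trace_mul_comm]
  simp [trace, Matrix.mul_assoc]

end Conjugation

end Matrix

section WeightedSums

variable {n : ℕ}

theorem sum_mul_le_sum_lt_of_antitone {R : Type*} [CommRing R] [LinearOrder R]
    [IsStrictOrderedRing R] {k : ℕ} (hk : k < n) {e w : Fin n → R}
    (he : Antitone e) (hw0 : ∀ i, 0 ≤ w i) (hw1 : ∀ i, w i ≤ 1) (hw : ∑ i, w i = k) :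
    ∑ i, e i * w i ≤ ∑ i : Fin n with i.val < k, e i := by
  -- `e k` separates the `k` largest weights from the others.
  set c := e ⟨k, hk⟩
  have hpoint : ∀ i, e i * w i ≤ (if i.val < k then e i - c else 0) + c * w i := by
    intro i
    split_ifs with hi
    · have : c ≤ e i := he (Fin.mk_le_mk.mpr hi.le)
      nlinarith [hw1 i]
    · have : e i ≤ c := he (Fin.mk_le_mk.mpr (not_lt.mp hi))
      nlinarith [hw0 i]
  calc ∑ i, e i * w i ≤ ∑ i : Fin n, ((if i.val < k then e i - c else 0) + c * w i) :=
        Finset.sum_le_sum fun i _ => hpoint i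
    _ = ∑ i : Fin n with i.val < k, e i := by
        rw [Finset.sum_add_distrib, ← Finset.sum_filter, ← Finset.mul_sum, hw,
          Finset.sum_sub_distrib, Finset.sum_const, Fin.card_filter_val_lt, min_eq_right hk.le,
          nsmul_eq_mul]
        ring

theorem sum_lt_add_le_sum_lt {M : Type*} [AddCommMonoid M] [PartialOrder M]
    [IsOrderedAddMonoid M] {e : Fin n → M} (he : ∀ i, 0 ≤ e i) {k r : ℕ} {j : Fin n}
    (hkj : k ≤ j) (hjr : (j : ℕ) < r) :
    ∑ i : Fin n with i.val < k, e i + e j ≤ ∑ i : Fin n with i.val < r, e i := by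
  rw [add_comm, ← Finset.sum_insert (by simp [hkj])]
  refine Finset.sum_le_sum_of_subset_of_nonneg ?_ fun i _ _ => he i
  intro i
  simp only [Finset.mem_insert, Finset.mem_filter, Finset.mem_univ, true_and]
  omega

end WeightedSums

theorem stmt6 {n r rt : ℕ} (hrn : r ≤ n) (hrt : rt < r)
    (P : Matrix (Fin n) (Fin n) ℝ)
    (Q : Matrix (Fin n) (Fin n) ℝ) (d : Fin n → ℝ)
    (hQ : Qᵀ * Q = 1) (hd : Antitone d) (hdnonneg : ∀ i, 0 ≤ d i)
    (hdecomp : P = Q * Matrix.diagonal d * Qᵀ)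
    (X0 : Matrix (Fin n) (Fin n) ℝ)
    (hX0 : X0 = Q * Matrix.diagonal (fun i : Fin n => if (i : ℕ) < r then (1 : ℝ) else 0) * Qᵀ)
    (Xhat : Matrix (Fin n) (Fin n) ℝ)
    (hsym : Xhat.IsSymm) (hidem : Xhat * Xhat = Xhat)
    (hrankX : Xhat.rank = rt) :
    ((P * P) * (X0 - Xhat)).trace ≥ (d ⟨r - 1, by omega⟩) ^ 2 := by
  have hQQ : Q * Qᵀ = 1 := mul_eq_one_comm.mp hQ
  set e : Fin n → ℝ := fun i => d i ^ 2
  have he : Antitone e := fun i j hij => pow_le_pow_left₀ (hdnonneg j) (hd hij) 2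
  have hPP : P * P = Q * diagonal e * Qᵀ := by
    rw [hdecomp, conj_diagonal_mul_conj_diagonal hQ, ← sq]
    rfl
  set M := Qᵀ * Xhat * Q
  have hMsym : M.IsSymm := hsym.transpose_mul_mul Q
  have hMidem : IsIdempotentElem M := isIdempotentElem_transpose_mul_mul hQQ hidem
  have hMtrace : ∑ i, M i i = rt := by
    change M.trace = rt
    rw [trace_transpose_mul_mul hQQ, trace_eq_rank_of_isIdempotentElem hidem, hrankX]
  have hX0trace : (P * P * X0).trace = ∑ i : Fin n with i.val < r, e i := by
    rw [hPP, hX0, trace_conj_diagonal_mul, transpose_mul_conj_diagonal hQ, Finset.sum_filter]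
    simp
  have hXhattrace : (P * P * Xhat).trace ≤ ∑ i : Fin n with i.val < rt, e i := by
    rw [hPP, trace_conj_diagonal_mul]
    exact sum_mul_le_sum_lt_of_antitone (hrt.trans_le hrn) he
      (hMsym.diag_nonneg_of_isIdempotentElem hMidem) (hMsym.diag_le_one_of_isIdempotentElem hMidem)
      hMtrace
  have hgap := sum_lt_add_le_sum_lt (fun i => sq_nonneg (d i)) (j := ⟨r - 1, by omega⟩)
    (show rt ≤ r - 1 by omega) (show r - 1 < r by omega)
  rw [Matrix.mul_sub, trace_sub]
  linarith
end

section
/- Let S be an n×n real symmetric matrix that is block-constant on the diagonal blocks of a partition C₁,…,C_r of {1,…,n}, with S_{ij} = a_{kk} for i,j ∈ C_k. Assume S is weakly assortative: p_gap := min_k ( a_{kk} − max_{i∈C_k, j∈C_ℓ, ℓ≠k} S_{ij} ) > 0. Let X₀ = Z₀(Z₀ᵀZ₀)⁻¹Z₀ᵀ be the normalized clustering matrix of the partition. Let X̂ be any n×n symmetric doubly substochastic nonnegative matrix with X̂ ⪰ 0, trace(X̂) = r, and each row sum of X̂ equal to 1 (so in particular for each k, Σ_{j} X̂_{ij} = 1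 for i ∈ C_k). If ⟨S, X̂⟩ ≥ ⟨S, X₀⟩ − ε′ for some ε′ ≥ 0, then ‖X̂ − X₀‖_F² ≤ 2ε′ / (n·π_min·p_gap), where π_min = min_k |C_k|/n. -/
open Matrix BigOperators

/-- Frobenius norm of a real matrix. -/
noncomputable def frob {n m : ℕ} (M : Matrix (Fin n) (Fin m) ℝ) : ℝ :=
  Real.sqrt (∑ i, ∑ j, (M i j) ^ 2)

/-- Membership matrix of the partition given by a cluster assignment `c`. -/
noncomputable def memb {n r : ℕ} (c : Fin n → Fin r) : Matrix (Fin n) (Fin r) ℝ :=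
  Matrix.of fun i k => if c i = k then 1 else 0

/-- Normalized clustering matrix `Z (ZᵀZ)⁻¹ Zᵀ` of the assignment `c`. -/
noncomputable def ncm {n r : ℕ} (c : Fin n → Fin r) : Matrix (Fin n) (Fin n) ℝ :=
  memb c * ((memb c)ᵀ * memb c)⁻¹ * (memb c)ᵀ

/-- Trace inner product `⟨M, N⟩ = trace(MᵀN)`. -/
noncomputable def ip {n : ℕ} (M N : Matrix (Fin n) (Fin n) ℝ) : ℝ :=
  (Mᵀ * N).trace

/-!
Let `B` be the mass of `X̂` outside the diagonal blocks `C_k × C_k`. Weak assortativity gives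
`⟨S, X̂⟩ ≤ ⟨S, X₀⟩ - p_gap B`, hence `B ≤ ε' / p_gap`. On the other side, a symmetric nonnegative
matrix with unit row sums satisfies `X̂ ⪯ I`, so `‖X̂‖_F² = tr X̂² ≤ tr X̂ = r = ‖X₀‖_F²`, while
`⟨X̂, X₀⟩ = Σ_i (1 - B_i) / |C_{c i}| ≥ r - B / min_k |C_k|`, where `B_i` is the share of row `i`
in `B`. Expanding the square, `‖X̂ - X₀‖_F² ≤ 2 B / min_k |C_k|`.
-/

open Finset

section PosSemidef

variable {ι : Type*} [Fintype ι]

open scoped MatrixOrder ComplexOrder in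
lemma Matrix.PosSemidef.trace_mul_nonneg {𝕜 : Type*} [RCLike 𝕜] {A B : Matrix ι ι 𝕜}
    (hA : A.PosSemidef) (hB : B.PosSemidef) : 0 ≤ (A * B).trace := by
  classical
  obtain ⟨C, rfl⟩ := CStarAlgebra.nonneg_iff_eq_star_mul_self.mp hA.nonneg
  rw [star_eq_conjTranspose, Matrix.mul_assoc, trace_mul_comm]
  exact (hB.mul_mul_conjTranspose_same C).trace_nonneg

open scoped ComplexOrder in
lemma Matrix.PosSemidef.trace_mul_self_le_trace {𝕜 : Type*} [RCLike 𝕜] [DecidableEq ι]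
    {A : Matrix ι ι 𝕜} (hA : A.PosSemidef) (hA₁ : (1 - A).PosSemidef) :
    (A * A).trace ≤ A.trace := by
  have := hA.trace_mul_nonneg hA₁
  rwa [Matrix.mul_sub, Matrix.mul_one, trace_sub, sub_nonneg] at this

lemma Matrix.IsSymm.dotProduct_one_sub_mulVec [DecidableEq ι] {A : Matrix ι ι ℝ}
    (hA : A.IsSymm) (hrow : ∀ i, ∑ j, A i j = 1) (x : ι → ℝ) :
    x ⬝ᵥ (1 - A) *ᵥ x = (∑ i, ∑ j, A i j * (x i - x j) ^ 2) / 2 := by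
  have hswap :
      ∑ i, ∑ j, A i j * (x j * (x j - x i)) = ∑ i, ∑ j, A i j * (x i * (x i - x j)) := by
    rw [sum_comm]
    simp_rw [hA.apply]
  have hsplit : ∑ i, ∑ j, A i j * (x i - x j) ^ 2
      = ∑ i, ∑ j, A i j * (x i * (x i - x j)) + ∑ i, ∑ j, A i j * (x j * (x j - x i)) := by
    simp only [← sum_add_distrib]
    exact sum_congr rfl fun i _ => sum_congr rfl fun j _ => by ring
  have hrowform : ∀ i, ∑ j, A i j * (x i * (x i - x j)) = x i * ((1 - A) *ᵥ x) i := by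
    intro i
    rw [sub_mulVec, one_mulVec, Pi.sub_apply, mulVec, dotProduct]
    calc ∑ j, A i j * (x i * (x i - x j)) = x i * (x i * ∑ j, A i j - ∑ j, A i j * x j) := by
          simp only [mul_sum, ← sum_sub_distrib]
          exact sum_congr rfl fun j _ => by ring
      _ = x i * (x i - ∑ j, A i j * x j) := by rw [hrow, mul_one]
  rw [hsplit, hswap, dotProduct]
  simp only [hrowform]
  ring

lemma posSemidef_one_sub_of_sum_eq_one [DecidableEq ι] {A : Matrix ι ι ℝ} (hA : A.IsHermitian)
    (hnonneg : ∀ i j, 0 ≤ A i j) (hrow : ∀ i, ∑ j, A i j = 1) : (1 - A).PosSemidef := by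
  refine .of_dotProduct_mulVec_nonneg (isHermitian_one.sub hA) fun x => ?_
  rw [star_trivial, (isHermitian_iff_isSymm.1 hA).dotProduct_one_sub_mulVec hrow]
  exact div_nonneg (sum_nonneg fun i _ => sum_nonneg fun j _ =>
    mul_nonneg (hnonneg i j) (sq_nonneg _)) zero_le_two

end PosSemidef

section Clustering

variable {n r : ℕ}

def clusterSize (c : Fin n → Fin r) (k : Fin r) : ℕ := #{i | c i = k}

def offBlockMass (c : Fin n → Fin r) (M : Matrix (Fin n) (Fin n) ℝ) : ℝ :=
  ∑ i, ∑ j with c j ≠ c i, M i j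

variable {c : Fin n → Fin r}

lemma clusterSize_pos (hc : Function.Surjective c) (k : Fin r) : 0 < clusterSize c k := by
  obtain ⟨i, rfl⟩ := hc k
  exact card_pos.mpr ⟨i, by simp⟩

lemma sum_sameCluster_const (i : Fin n) (x : ℝ) :
    ∑ j with c j = c i, x = clusterSize c (c i) * x := by
  rw [sum_const, nsmul_eq_mul, clusterSize]

lemma sum_inv_clusterSize (hc : Function.Surjective c) :
    ∑ i, (clusterSize c (c i) : ℝ)⁻¹ = r := by
  rw [← sum_fiberwise' univ c fun k => (clusterSize c k : ℝ)⁻¹]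
  have hk : ∀ k, ∑ i with c i = k, (clusterSize c k : ℝ)⁻¹ = 1 := fun k => by
    rw [sum_const, nsmul_eq_mul, ← clusterSize,
      mul_inv_cancel₀ (Nat.cast_ne_zero.2 (clusterSize_pos hc k).ne')]
  simp only [hk, sum_const, card_univ, Fintype.card_fin, nsmul_eq_mul, mul_one]

lemma memb_transpose_mul_memb (c : Fin n → Fin r) :
    (memb c)ᵀ * memb c = diagonal fun k => (clusterSize c k : ℝ) := by
  ext k l
  simp only [mul_apply, transpose_apply, memb, of_apply, diagonal_apply, mul_ite, mul_one,
    mul_zero]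
  rcases eq_or_ne k l with rfl | hkl
  · simp +contextual [clusterSize]
  · simp +contextual [hkl, hkl.symm]

lemma ncm_apply (hc : Function.Surjective c) (i j : Fin n) :
    ncm c i j = if c j = c i then (clusterSize c (c i) : ℝ)⁻¹ else 0 := by
  have hinv : ((memb c)ᵀ * memb c)⁻¹ = diagonal fun k => (clusterSize c k : ℝ)⁻¹ := by
    rw [memb_transpose_mul_memb]
    refine inv_eq_right_inv ?_
    rw [diagonal_mul_diagonal, ← diagonal_one]
    congr 1 with k
    exact mul_inv_cancel₀ (Nat.cast_ne_zero.2 (clusterSize_pos hc k).ne')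
  rw [ncm, hinv]
  by_cases h : c j = c i <;> simp [mul_apply, memb, diagonal_apply, h, Ne.symm]

lemma ip_eq_sum (M N : Matrix (Fin n) (Fin n) ℝ) : ip M N = ∑ i, ∑ j, M i j * N i j := by
  simp only [ip, trace, Matrix.diag, mul_apply, transpose_apply]
  exact sum_comm

lemma ip_ncm (hc : Function.Surjective c) (M : Matrix (Fin n) (Fin n) ℝ) :
    ip M (ncm c) = ∑ i, (∑ j with c j = c i, M i j) / clusterSize c (c i) := by
  simp only [ip_eq_sum, ncm_apply hc, mul_ite, mul_zero, ← sum_filter, div_eq_mul_inv, sum_mul]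

lemma ip_ncm_self (hc : Function.Surjective c) : ip (ncm c) (ncm c) = r := by
  rw [← sum_inv_clusterSize hc, ip_ncm hc]
  refine sum_congr rfl fun i _ => ?_
  have hsame : ∀ j ∈ ({j | c j = c i} : Finset _), ncm c i j = (clusterSize c (c i) : ℝ)⁻¹ :=
    fun j hj => by rw [ncm_apply hc, if_pos (mem_filter.1 hj).2]
  rw [sum_congr rfl hsame, sum_sameCluster_const,
    mul_inv_cancel₀ (Nat.cast_ne_zero.2 (clusterSize_pos hc _).ne'), one_div]

lemma ip_ncm_of_blockConst (hc : Function.Surjective c) {S : Matrix (Fin n) (Fin n) ℝ}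
    {a : Fin r → ℝ} (hblock : ∀ i j, c i = c j → S i j = a (c i)) :
    ip S (ncm c) = ∑ i, a (c i) := by
  rw [ip_ncm hc]
  refine sum_congr rfl fun i _ => ?_
  rw [sum_congr rfl fun j hj => hblock i j (mem_filter.1 hj).2.symm, sum_sameCluster_const,
    mul_div_cancel_left₀ _ (Nat.cast_ne_zero.2 (clusterSize_pos hc _).ne')]

lemma sum_sameCluster_eq_one_sub {M : Matrix (Fin n) (Fin n) ℝ} (hrow : ∀ i, ∑ j, M i j = 1)
    (i : Fin n) : ∑ j with c j = c i, M i j = 1 - ∑ j with c j ≠ c i, M i j := by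
  rw [← hrow i, ← sum_filter_add_sum_filter_not univ (fun j => c j = c i)]
  ring

lemma sub_offBlockMass_div_le_ip_ncm (hc : Function.Surjective c)
    {X : Matrix (Fin n) (Fin n) ℝ} (hnonneg : ∀ i j, 0 ≤ X i j) (hrow : ∀ i, ∑ j, X i j = 1)
    {μ : ℝ} (hμ : 0 < μ) (hμc : ∀ k, μ ≤ clusterSize c k) :
    r - offBlockMass c X / μ ≤ ip X (ncm c) := by
  rw [ip_ncm hc, ← sum_inv_clusterSize hc, offBlockMass, sum_div, ← sum_sub_distrib]
  refine sum_le_sum fun i _ => ?_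
  have hoff : 0 ≤ ∑ j with c j ≠ c i, X i j := sum_nonneg fun j _ => hnonneg i j
  have hsize : (clusterSize c (c i) : ℝ)⁻¹ ≤ μ⁻¹ := inv_anti₀ hμ (hμc _)
  rw [sum_sameCluster_eq_one_sub hrow, sub_div, one_div, div_eq_mul_inv _ μ, div_eq_mul_inv]
  gcongr

lemma ip_le_of_assortative {S X : Matrix (Fin n) (Fin n) ℝ} {a : Fin r → ℝ} {pgap : ℝ}
    (hblock : ∀ i j, c i = c j → S i j = a (c i))
    (hassort : ∀ i j, c i ≠ c j → S i j ≤ a (c i) - pgap)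
    (hnonneg : ∀ i j, 0 ≤ X i j) (hrow : ∀ i, ∑ j, X i j = 1) :
    ip S X ≤ ∑ i, a (c i) - pgap * offBlockMass c X := by
  have hentry : ∀ i j,
      S i j * X i j ≤ a (c i) * X i j - if c j ≠ c i then pgap * X i j else 0 := by
    intro i j
    by_cases h : c i = c j
    · simp [h, hblock i j h]
    · simpa [Ne.symm h, sub_mul] using mul_le_mul_of_nonneg_right (hassort i j h) (hnonneg i j)
  calc ip S X ≤ ∑ i, ∑ j, (a (c i) * X i j - if c j ≠ c i then pgap * X i j else 0) := by
        rw [ip_eq_sum]; gcongr with i _ j _; exact hentry i j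
    _ = ∑ i, a (c i) - pgap * offBlockMass c X := by
        simp only [sum_sub_distrib, ← mul_sum, hrow, mul_one, ← sum_filter, offBlockMass]

lemma ip_comm (M N : Matrix (Fin n) (Fin n) ℝ) : ip M N = ip N M := by
  simp only [ip_eq_sum, mul_comm]

lemma ip_sub_sub (M N : Matrix (Fin n) (Fin n) ℝ) :
    ip (M - N) (M - N) = ip M M - 2 * ip M N + ip N N := by
  simp only [ip, transpose_sub, Matrix.sub_mul, Matrix.mul_sub, trace_sub]
  rw [← ip, ← ip, ← ip, ← ip, ip_comm N M]
  ring

lemma frob_sq_eq_ip (M : Matrix (Fin n) (Fin n) ℝ) : frob M ^ 2 = ip M M := by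
  rw [frob, Real.sq_sqrt (by positivity), ip_eq_sum]
  simp only [sq]

lemma frob_sub_ncm_sq_le (hc : Function.Surjective c) {X : Matrix (Fin n) (Fin n) ℝ}
    (hpsd : X.PosSemidef) (hnonneg : ∀ i j, 0 ≤ X i j) (htrace : X.trace = r)
    (hrow : ∀ i, ∑ j, X i j = 1) {μ : ℝ} (hμ : 0 < μ) (hμc : ∀ k, μ ≤ clusterSize c k) :
    frob (X - ncm c) ^ 2 ≤ 2 * offBlockMass c X / μ := by
  have hXX : ip X X ≤ r := by
    rw [ip, (isHermitian_iff_isSymm.1 hpsd.1).eq, ← htrace]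
    exact hpsd.trace_mul_self_le_trace (posSemidef_one_sub_of_sum_eq_one hpsd.1 hnonneg hrow)
  have hXX₀ := sub_offBlockMass_div_le_ip_ncm hc hnonneg hrow hμ hμc
  rw [frob_sq_eq_ip, ip_sub_sub, ip_ncm_self hc, mul_div_assoc]
  linarith

end Clustering

theorem stmt8_general {n r : ℕ} (hn : 0 < n) (hr : 0 < r)
    (c : Fin n → Fin r) (hc : Function.Surjective c)
    (S : Matrix (Fin n) (Fin n) ℝ)
    (a : Fin r → ℝ)
    (hblock : ∀ i j, c i = c j → S i j = a (c i))
    (pgap : ℝ) (hpgap : 0 < pgap)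
    (hassort : ∀ i j, c i ≠ c j → S i j ≤ a (c i) - pgap)
    (Xhat : Matrix (Fin n) (Fin n) ℝ)
    (hpsd : Xhat.PosSemidef)
    (hnonneg : ∀ i j, 0 ≤ Xhat i j)
    (htrace : Xhat.trace = (r : ℝ))
    (hrowsum : ∀ i, ∑ j, Xhat i j = 1)
    (ε' : ℝ)
    (hineq : ip S Xhat ≥ ip S (ncm c) - ε') :
    (frob (Xhat - ncm c)) ^ 2 ≤
      2 * ε' / ((n : ℝ) *
        (Finset.univ.inf' (@Finset.univ_nonempty _ _ (Fin.pos_iff_nonempty.mp hr))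
          (fun k => ((Finset.univ.filter (fun i => c i = k)).card : ℝ) / n)) * pgap) := by
  have : Nonempty (Fin r) := Fin.pos_iff_nonempty.mp hr
  set μ : ℝ := n * univ.inf' univ_nonempty fun k => (clusterSize c k : ℝ) / n
  have hn' : (0 : ℝ) < n := Nat.cast_pos.2 hn
  have hμ : 0 < μ := mul_pos hn' <| (lt_inf'_iff _).2 fun k _ =>
    div_pos (Nat.cast_pos.2 (clusterSize_pos hc k)) hn'
  have hμc : ∀ k, μ ≤ clusterSize c k := fun k =>
    calc μ ≤ n * (clusterSize c k / n) :=
          mul_le_mul_of_nonneg_left (inf'_le _ (mem_univ k)) hn'.le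
      _ = clusterSize c k := mul_div_cancel₀ _ hn'.ne'
  have hoff : offBlockMass c Xhat ≤ ε' / pgap := by
    rw [le_div_iff₀' hpgap]
    linarith [ip_le_of_assortative hblock hassort hnonneg hrowsum, ip_ncm_of_blockConst hc hblock]
  calc frob (Xhat - ncm c) ^ 2 ≤ 2 * offBlockMass c Xhat / μ :=
        frob_sub_ncm_sq_le hc hpsd hnonneg htrace hrowsum hμ hμc
    _ ≤ 2 * (ε' / pgap) / μ := by gcongr
    _ = 2 * ε' / (μ * pgap) := by ring

theorem stmt8 {n r : ℕ} (hn : 0 < n) (hr : 0 < r)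
    (c : Fin n → Fin r) (hc : Function.Surjective c)
    (S : Matrix (Fin n) (Fin n) ℝ) (hSsym : S.IsSymm)
    (a : Fin r → ℝ)
    (hblock : ∀ i j, c i = c j → S i j = a (c i))
    (pgap : ℝ) (hpgap : 0 < pgap)
    (hassort : ∀ i j, c i ≠ c j → S i j ≤ a (c i) - pgap)
    (Xhat : Matrix (Fin n) (Fin n) ℝ)
    (hsym : Xhat.IsSymm) (hpsd : Xhat.PosSemidef)
    (hnonneg : ∀ i j, 0 ≤ Xhat i j)
    (htrace : Xhat.trace = (r : ℝ))
    (hrowsum : ∀ i, ∑ j, Xhat i j = 1)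
    (ε' : ℝ) (hε' : 0 ≤ ε')
    (hineq : ip S Xhat ≥ ip S (ncm c) - ε') :
    (frob (Xhat - ncm c)) ^ 2 ≤
      2 * ε' / ((n : ℝ) *
        (Finset.univ.inf' (@Finset.univ_nonempty _ _ (Fin.pos_iff_nonempty.mp hr))
          (fun k => ((Finset.univ.filter (fun i => c i = k)).card : ℝ) / n)) * pgap) :=
  stmt8_general hn hr c hc S a hblock pgap hpgap hassort Xhat hpsd hnonneg htrace hrowsum ε' hineq
end

section
/- Let B be an r×r symmetric weakly assortative matrix (B_{ii} ≥ B_{ij} for all j ≠ i), with gap p_gap = min_i (B_{ii} − max_{j≠i} B_{ij}) > 0. Fix nonnegative reals γ₁,…,γ_r with m̂ = Σᵢ γᵢ > 0, and suppose there exist i₀ ≠ j₀ with γ_{i₀} ≥ c and γ_{j₀} ≥ c for some c > 0. Then (Σ_{i,j} B_{ij} γᵢ γⱼ)/m̂ ≤ Σᵢ B_{ii} γᵢ − 2·p_gap·c²/m̂. -/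
open Matrix BigOperators

theorem stmt18 {r : ℕ} (B : Matrix (Fin r) (Fin r) ℝ) (hBsym : B.IsSymm)
    (pgap : ℝ) (hpgap : 0 < pgap)
    (hassort : ∀ i j, i ≠ j → B i j ≤ B i i - pgap)
    (γ : Fin r → ℝ) (hγ : ∀ i, 0 ≤ γ i)
    (mhat : ℝ) (hmhat : mhat = ∑ i, γ i) (hmpos : 0 < mhat)
    (i0 j0 : Fin r) (hne : i0 ≠ j0)
    (cc : ℝ) (hcc : 0 < cc) (hi0 : cc ≤ γ i0) (hj0 : cc ≤ γ j0) :
    (∑ i, ∑ j, B i j * γ i * γ j) / mhat ≤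
      ∑ i, B i i * γ i - 2 * pgap * cc ^ 2 / mhat := by
  have hprod : cc ^ 2 ≤ γ i0 * γ j0 := by nlinarith
  set D : Fin r × Fin r → ℝ := fun p => (B p.1 p.1 - B p.1 p.2) * (γ p.1 * γ p.2) with hD
  have hDnn : ∀ p : Fin r × Fin r, 0 ≤ D p := by
    intro p
    by_cases h : p.1 = p.2
    · simp [hD, h]
    · have h1 := hassort p.1 p.2 h
      have h2 : pgap ≤ B p.1 p.1 - B p.1 p.2 := by linarith
      exact mul_nonneg (le_trans hpgap.le h2) (mul_nonneg (hγ _) (hγ _))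
  have hne2 : ((i0, j0) : Fin r × Fin r) ≠ (j0, i0) :=
    fun h => hne (congrArg Prod.fst h)
  have hpairs : 2 * pgap * cc ^ 2 ≤ ∑ p : Fin r × Fin r, D p := by
    have hsum := Finset.sum_le_sum_of_subset_of_nonneg
      (Finset.subset_univ ({(i0, j0), (j0, i0)} : Finset (Fin r × Fin r)))
      (fun p _ _ => hDnn p)
    rw [Finset.sum_pair hne2] at hsum
    have hg1 : pgap ≤ B i0 i0 - B i0 j0 := by linarith [hassort i0 j0 hne]
    have hg2 : pgap ≤ B j0 j0 - B j0 i0 := by linarith [hassort j0 i0 hne.symm]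
    have hγn : (0:ℝ) ≤ cc ^ 2 := by positivity
    have e1 : pgap * cc ^ 2 ≤ D (i0, j0) :=
      mul_le_mul hg1 hprod hγn (by linarith)
    have e2 : pgap * cc ^ 2 ≤ D (j0, i0) := by
      have : pgap * cc ^ 2 ≤ (B j0 j0 - B j0 i0) * (γ j0 * γ i0) :=
        mul_le_mul hg2 (by nlinarith) hγn (by linarith)
      exact this
    linarith
  have hsplit : ∑ i, ∑ j, B i j * γ i * γ j
      = (∑ i, B i i * γ i) * mhat - ∑ p : Fin r × Fin r, D p := by
    rw [hmhat, Fintype.sum_prod_type, Finset.sum_mul, ← Finset.sum_sub_distrib]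
    apply Finset.sum_congr rfl
    intro i _
    rw [Finset.mul_sum, ← Finset.sum_sub_distrib]
    apply Finset.sum_congr rfl
    intro j _
    simp only [hD]
    ring
  rw [hsplit, sub_div, mul_div_cancel_right₀ _ (ne_of_gt hmpos)]
  have hdiv : 2 * pgap * cc ^ 2 / mhat ≤ (∑ p : Fin r × Fin r, D p) / mhat := by
    gcongr
  linarith
end
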